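/- The monoid M = Mon⟨a,b,c,d : ab=ba, cbad=1, cb²=1, a²d=1, cad=0, cbd=0, cd=1⟩ is 0-simple: for every nonzero w ∈ M, the two-sided ideal MwM equals M. -/

import Mathlib

inductive Letter | a | b | c | d | z
deriving DecidableEq

abbrev W := FreeMonoid Letter
def A : W := FreeMonoid.of .a
def B : W := FreeMonoid.of .b
def C : W := FreeMonoid.of .c
def D : W := FreeMonoid.of .d
def Z : W := FreeMonoid.of .z

/-- The defining relations of `M = Mon⟨a,b,c,d : ab=ba, cbad=1, cb²=1, a²d=1,
cad=0, cbd=0, cd=1⟩`, with the zero realized by the letter `z`. -/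
def relM : W → W → Prop := fun x y =>
  (x = A * B ∧ y = B * A) ∨
  (x = C * B * A * D ∧ y = 1) ∨ (x = C * B * B ∧ y = 1) ∨
  (x = A * A * D ∧ y = 1) ∨
  (x = C * A * D ∧ y = Z) ∨ (x = C * B * D ∧ y = Z) ∨ (x = C * D ∧ y = 1) ∨
  (∃ l : Letter, x = FreeMonoid.of l * Z ∧ y = Z) ∨
  (∃ l : Letter, x = Z * FreeMonoid.of l ∧ y = Z)

def Mcon : Con W := conGen relM

/-- The monoid `M = Mon⟨a,b,c,d : ab=ba, cbad=1, cb²=1, a²d=1, cad=0, cbd=0, cd=1⟩`. -/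
abbrev M := Mcon.Quotient

/-!
Call `b`, `d`, `ad` the left-invertible letters (`cb·b = c·d = a·ad = 1`) and `a`, `c`, `cb` the
right-invertible ones. Multiplying on the right by a generator and rewriting with the relations
shows that every element of `M` is `0` or of the form `q p` with `q` left-invertible and `p` a
product of `a`, `c`, `cb`. Then `q' (q p) p' = 1` for a left inverse `q'` of `q` and a right
inverse `p'` of `p`, so every nonzero element generates `M`. That `0 ≠ 1` is seen in an action of
`M` on stacks of letters by partial maps.
-/

def leftInvertibles (N : Type*) [Monoid N] : Submonoid N where
  carrier := {x | ∃ y, y * x = 1}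
  one_mem' := ⟨1, one_mul 1⟩
  mul_mem' := by
    rintro x x' ⟨y, hy⟩ ⟨y', hy'⟩
    exact ⟨y' * y, by rw [mul_assoc, ← mul_assoc y, hy, one_mul, hy']⟩

theorem Con.induction_on_mul_of {α : Type*} {c : Con (FreeMonoid α)} {P : c.Quotient → Prop}
    (one : P 1) (mul_of : ∀ x l, P x → P (x * (FreeMonoid.of l : FreeMonoid α)))
    (x : c.Quotient) : P x := by
  suffices h : ∀ (w : FreeMonoid α) (y : c.Quotient), P y → P (y * w) by
    induction x using Con.induction_on with
    | H w => simpa using h w 1 one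
  intro w
  induction w using FreeMonoid.inductionOn' with
  | one => simp
  | of_mul l w ih =>
    intro y hy
    simpa [mul_assoc] using ih _ (mul_of y l hy)

namespace M

theorem mk_eq_of_relM {x y : W} (h : relM x y) : (x : M) = y :=
  Mcon.eq.2 (ConGen.Rel.of _ _ h)

theorem z_mul_of (l : Letter) : (Z : M) * (FreeMonoid.of l : W) = Z :=
  mk_eq_of_relM (by simp [relM])

theorem mul_z (x : M) : x * Z = Z := by
  induction x using Con.induction_on_mul_of with
  | one => exact one_mul _
  | mul_of x l hx =>
    rw [mul_assoc, ← Con.coe_mul, mk_eq_of_relM (y := Z) (by simp [relM]), hx]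

theorem mul_mk_eq_of_relM {u v : W} (h : relM u v) (x : M) : x * u = x * v := by
  rw [mk_eq_of_relM h]

theorem mul_a_mul_b (x : M) : x * A * B = x * B * A := by
  simpa [mul_assoc] using mul_mk_eq_of_relM (u := A * B) (v := B * A) (by simp [relM]) x

theorem mul_c_mul_b_mul_a_mul_d (x : M) : x * C * B * A * D = x := by
  simpa [mul_assoc] using mul_mk_eq_of_relM (u := C * B * A * D) (v := 1) (by simp [relM]) x

theorem mul_c_mul_b_mul_b (x : M) : x * C * B * B = x := by
  simpa [mul_assoc] using mul_mk_eq_of_relM (u := C * B * B) (v := 1) (by simp [relM]) x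

theorem mul_a_mul_a_mul_d (x : M) : x * A * A * D = x := by
  simpa [mul_assoc] using mul_mk_eq_of_relM (u := A * A * D) (v := 1) (by simp [relM]) x

theorem mul_c_mul_a_mul_d (x : M) : x * C * A * D = Z := by
  simpa [mul_assoc, mul_z] using mul_mk_eq_of_relM (u := C * A * D) (v := Z) (by simp [relM]) x

theorem mul_c_mul_b_mul_d (x : M) : x * C * B * D = Z := by
  simpa [mul_assoc, mul_z] using mul_mk_eq_of_relM (u := C * B * D) (v := Z) (by simp [relM]) x

theorem mul_c_mul_d (x : M) : x * C * D = x := by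
  simpa [mul_assoc] using mul_mk_eq_of_relM (u := C * D) (v := 1) (by simp [relM]) x

theorem b_mem_leftInvertibles : (B : M) ∈ leftInvertibles M :=
  ⟨C * B, by simpa using mul_c_mul_b_mul_b 1⟩

theorem d_mem_leftInvertibles : (D : M) ∈ leftInvertibles M :=
  ⟨C, by simpa using mul_c_mul_d 1⟩

theorem a_mul_d_mem_leftInvertibles : (A : M) * D ∈ leftInvertibles M :=
  ⟨A, by simpa [← mul_assoc] using mul_a_mul_a_mul_d 1⟩

inductive IsRightWord : M → Prop
  | one : IsRightWord 1
  | mul_a {p : M} : IsRightWord p → IsRightWord (p * A)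
  | mul_c {p : M} : IsRightWord p → IsRightWord (p * C)
  | mul_cb {p : M} : IsRightWord p → IsRightWord (p * C * B)

namespace IsRightWord

theorem exists_mul_eq_one {p : M} (hp : IsRightWord p) : ∃ p', p * p' = 1 := by
  induction hp with
  | one => exact ⟨1, mul_one 1⟩
  | @mul_a p _ ih =>
    obtain ⟨p', hp'⟩ := ih
    exact ⟨A * D * p', by simp only [← mul_assoc, mul_a_mul_a_mul_d, hp']⟩
  | @mul_c p _ ih =>
    obtain ⟨p', hp'⟩ := ih
    exact ⟨D * p', by simp only [← mul_assoc, mul_c_mul_d, hp']⟩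
  | @mul_cb p _ ih =>
    obtain ⟨p', hp'⟩ := ih
    exact ⟨B * p', by simp only [← mul_assoc, mul_c_mul_b_mul_b, hp']⟩

theorem mul_b {p : M} (hp : IsRightWord p) :
    ∃ q ∈ leftInvertibles M, ∃ r, IsRightWord r ∧ p * B = q * r := by
  induction hp with
  | one => exact ⟨B, b_mem_leftInvertibles, 1, one, by simp⟩
  | @mul_a p _ ih =>
    obtain ⟨q, hq, r, hr, h⟩ := ih
    exact ⟨q, hq, r * A, hr.mul_a, by rw [mul_a_mul_b, h, mul_assoc]⟩
  | @mul_c p hp _ => exact ⟨1, one_mem _, p * C * B, hp.mul_cb, (one_mul _).symm⟩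
  | @mul_cb p hp _ => exact ⟨1, one_mem _, p, hp, by rw [one_mul, mul_c_mul_b_mul_b]⟩

theorem mul_d {p : M} (hp : IsRightWord p) :
    p * D = Z ∨ ∃ q ∈ leftInvertibles M, ∃ r, IsRightWord r ∧ p * D = q * r := by
  rcases hp with _ | @⟨p, hp⟩ | @⟨p, hp⟩ | @⟨p, _⟩
  · exact Or.inr ⟨D, d_mem_leftInvertibles, 1, one, by simp⟩
  · rcases hp with _ | @⟨p, hp⟩ | @⟨p, _⟩ | @⟨p, hp⟩
    · exact Or.inr ⟨A * D, a_mul_d_mem_leftInvertibles, 1, one, by simp⟩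
    · exact Or.inr ⟨1, one_mem _, p, hp, by rw [one_mul, mul_a_mul_a_mul_d]⟩
    · exact Or.inl (mul_c_mul_a_mul_d p)
    · exact Or.inr ⟨1, one_mem _, p, hp, by rw [one_mul, mul_c_mul_b_mul_a_mul_d]⟩
  · exact Or.inr ⟨1, one_mem _, p, hp, by rw [one_mul, mul_c_mul_d]⟩
  · exact Or.inl (mul_c_mul_b_mul_d p)

end IsRightWord

def IsZeroOrFactored (x : M) : Prop :=
  x = Z ∨ ∃ q ∈ leftInvertibles M, ∃ p, IsRightWord p ∧ x = q * p

theorem IsZeroOrFactored.mul_of {x : M} (hx : IsZeroOrFactored x) (l : Letter) :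
    IsZeroOrFactored (x * (FreeMonoid.of l : W)) := by
  obtain rfl | ⟨q, hq, p, hp, rfl⟩ := hx
  · exact Or.inl (z_mul_of l)
  cases l with
  | a => exact Or.inr ⟨q, hq, p * A, hp.mul_a, mul_assoc _ _ _⟩
  | c => exact Or.inr ⟨q, hq, p * C, hp.mul_c, mul_assoc _ _ _⟩
  | z => exact Or.inl (mul_z _)
  | b =>
    change IsZeroOrFactored (q * p * B)
    obtain ⟨q', hq', r, hr, h⟩ := hp.mul_b
    exact Or.inr ⟨q * q', mul_mem hq hq', r, hr, by rw [mul_assoc, h, mul_assoc]⟩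
  | d =>
    change IsZeroOrFactored (q * p * D)
    obtain h | ⟨q', hq', r, hr, h⟩ := hp.mul_d
    · exact Or.inl (by rw [mul_assoc, h, mul_z])
    · exact Or.inr ⟨q * q', mul_mem hq hq', r, hr, by rw [mul_assoc, h, mul_assoc]⟩

theorem isZeroOrFactored (x : M) : IsZeroOrFactored x := by
  induction x using Con.induction_on_mul_of with
  | one => exact Or.inr ⟨1, one_mem _, 1, .one, (one_mul 1).symm⟩
  | mul_of x l hx => exact hx.mul_of l

theorem exists_mul_mul_eq_one {w : M} (hw : w ≠ Z) : ∃ u v : M, u * w * v = 1 := by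
  obtain hz | ⟨q, ⟨q', hq'⟩, p, hp, rfl⟩ := isZeroOrFactored w
  · exact absurd hz hw
  obtain ⟨p', hp'⟩ := hp.exists_mul_eq_one
  exact ⟨q', p', by rw [← mul_assoc, hq', one_mul, hp']⟩

/- `M` acts on the left of `Option (List Letter)`: `b` and `d` push themselves, `a` and `c` rewrite
the top of the stack by the relations, and `none` plays the role of `0`. -/
def stepA : List Letter → Option (List Letter)
  | .b :: t => (stepA t).map (.b :: ·)
  | .a :: .d :: t => some t
  | .d :: t => some (.a :: .d :: t)
  | _ => none

def stepC : List Letter → Option (List Letter)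
  | .d :: t => some t
  | .b :: .b :: t => some t
  | .b :: .a :: .d :: t => some t
  | _ => none

def stackAction : W →* Function.End (Option (List Letter)) :=
  FreeMonoid.lift fun
    | .a => fun s => s.bind stepA
    | .b => Option.map (.b :: ·)
    | .c => fun s => s.bind stepC
    | .d => Option.map (.d :: ·)
    | .z => fun _ => none

theorem mcon_le_ker_stackAction : Mcon ≤ Con.ker stackAction := by
  refine Con.conGen_le.2 ?_
  rintro x y (⟨rfl, rfl⟩ | ⟨rfl, rfl⟩ | ⟨rfl, rfl⟩ | ⟨rfl, rfl⟩ | ⟨rfl, rfl⟩ | ⟨rfl, rfl⟩ |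
    ⟨rfl, rfl⟩ | ⟨_ | _ | _ | _ | _, rfl, rfl⟩ | ⟨_ | _ | _ | _ | _, rfl, rfl⟩) <;>
    exact (Con.ker_rel _).2 (funext fun s => by rcases s with _ | t <;> rfl)

theorem z_ne_one : (Z : M) ≠ 1 := by
  intro h
  have := congrArg (fun x => Mcon.lift stackAction mcon_le_ker_stackAction x (some [])) h
  simp only [Con.lift_coe, map_one] at this
  cases this

end M

/-- `M` is `0`-simple: it is nontrivial and for every nonzero `w` the
two-sided ideal `M w M` is all of `M`. -/
theorem stmt14 :
    (Z : M) ≠ 1 ∧ ∀ w : M, w ≠ (Z : M) → ∀ x : M, ∃ u v : M, u * w * v = x := by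
  refine ⟨M.z_ne_one, fun w hw x => ?_⟩
  obtain ⟨u, v, h⟩ := M.exists_mul_mul_eq_one hw
  exact ⟨u, v * x, by rw [← mul_assoc, h, one_mul]⟩
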